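/- For every integer q ≥ 1 there exist a 3-cycle graph G over n = 6q + 9 agents (with uniform node weights w(v) = |α(v)|), an (E,q)-locally optimal independent set I in G, and an independent set O in G, such that w(I) = 3(q+1) and w(O) = 3(2q+3); consequently w(O)/w(I) = 2 + 1/(q+1) = k − 1 + 1/(q+1) for k = 3, showing that the (k − 1 + 1/q)-approximation analysis of (E,q)-local optimality is nearly tight. -/

import Mathlib

/-!
The `k`-cycle graph framework of Emek–Shpiro, "Barter Exchange with Bounded
Trading Cycles": a `k`-cycle graph over `n` agents is a finite simple graph whose
nodes `v` are labeled by agent sets `α(v) ⊆ [n]` with `2 ≤ |α(v)| ≤ k`, two distinct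
nodes being adjacent iff their labels intersect.
-/

open Finset

/-- A `k`-cycle graph over `n` agents. -/
structure CycleGraph (n k : ℕ) where
  /-- the node set -/
  V : Type
  fintypeV : Fintype V
  decEqV : DecidableEq V
  /-- the agent label of each node -/
  alpha : V → Finset (Fin n)
  two_le_card : ∀ v, 2 ≤ (alpha v).card
  card_le_k : ∀ v, (alpha v).card ≤ k

attribute [instance] CycleGraph.fintypeV CycleGraph.decEqV

namespace CycleGraph

variable {n k : ℕ}

/-- Adjacency: distinct nodes whose agent labels intersect. -/
def Adj (G : CycleGraph n k) (u v : G.V) : Prop :=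
  u ≠ v ∧ ((G.alpha u) ∩ (G.alpha v)).Nonempty

instance (G : CycleGraph n k) : DecidableRel G.Adj := fun u v =>
  inferInstanceAs (Decidable (u ≠ v ∧ ((G.alpha u) ∩ (G.alpha v)).Nonempty))

/-- Independent set: pairwise non-adjacent nodes, i.e., pairwise disjoint labels. -/
def Indep (G : CycleGraph n k) (I : Finset G.V) : Prop :=
  ∀ u ∈ I, ∀ v ∈ I, u ≠ v → G.alpha u ∩ G.alpha v = ∅

instance (G : CycleGraph n k) (I : Finset G.V) : Decidable (G.Indep I) :=
  inferInstanceAs (Decidable (∀ u ∈ I, ∀ v ∈ I, u ≠ v → G.alpha u ∩ G.alpha v = ∅))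

end CycleGraph

/-- The (closed-out) neighborhood `N_G(U)`: all nodes adjacent to some node of `U`. -/
def CycleGraph.nbhd {n k : ℕ} (G : CycleGraph n k) (U : Finset G.V) : Finset G.V :=
  Finset.univ.filter (fun v => ∃ u ∈ U, G.Adj u v)

/-- `α(U) = ⋃_{v∈U} α(v)`. -/
def CycleGraph.aset {n k : ℕ} (G : CycleGraph n k) (U : Finset G.V) : Finset (Fin n) :=
  U.biUnion G.alpha

/-- An independent set `I` is `(E,q)`-locally optimal if (i) it is a maximal independent
set, and (ii) there is no independent set `X ⊆ N_G(I)` with `|N_G(X) ∩ I| ≤ q` such that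
`I′ = (I ∪ X) ∖ (N_G(X) ∩ I)` is an independent set with `α(I) ⊊ α(I′)`.  (The output of
the local search algorithm `LS_q` is exactly such an independent set.) -/
def CycleGraph.EqLocalOpt {n k : ℕ} (G : CycleGraph n k) (q : ℕ)
    (I : Finset G.V) : Prop :=
  G.Indep I ∧
  (∀ v : G.V, G.Indep (insert v I) → v ∈ I) ∧
  ¬ ∃ X : Finset G.V, X ⊆ G.nbhd I ∧ G.Indep X ∧ (G.nbhd X ∩ I).card ≤ q ∧
      G.Indep ((I ∪ X) \ (G.nbhd X ∩ I)) ∧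
      G.aset I ⊂ G.aset ((I ∪ X) \ (G.nbhd X ∩ I))

/-!
Let `I` consist of the `q + 1` disjoint triples `I_i = {6i, 6i+3, 6i+7}` and `O` of the
`2q + 3` consecutive triples `O_j = {3j, 3j+1, 3j+2}`, which partition the agents. Every `O_j`
meets some `I_i`, so `I` is maximal. The triple `O_{2i+2} = {6i+6, 6i+7, 6i+8}` is the only
node outside `I` covering `6i+7 ∈ I_i`, and also the only one covering `6i+6 ∈ I_{i+1}`. So an
exchange that removes `I_i` (resp. `I_{i+1}`) but keeps all agents of `I` covered must add
`O_{2i+2}` and thereby remove `I_{i+1}` (resp. `I_i`) too. Along this chain, any improving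
exchange removes all `q + 1` nodes of `I`, which is more than `q`.
-/

namespace CycleGraph

variable {n k : ℕ} (G : CycleGraph n k)

@[simp]
theorem mem_nbhd {U : Finset G.V} {v : G.V} : v ∈ G.nbhd U ↔ ∃ u ∈ U, G.Adj u v := by
  simp [nbhd]

theorem mem_aset {U : Finset G.V} {a : Fin n} : a ∈ G.aset U ↔ ∃ u ∈ U, a ∈ G.alpha u :=
  mem_biUnion

theorem nbhd_empty : G.nbhd ∅ = ∅ := by
  ext; simp

variable {G} {I X : Finset G.V}

theorem Adj.symm {u v : G.V} (h : G.Adj u v) : G.Adj v u :=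
  ⟨h.1.symm, inter_comm (G.alpha u) _ ▸ h.2⟩

theorem Indep.eq_of_mem_alpha (hI : G.Indep I) {u v : G.V} (hu : u ∈ I) (hv : v ∈ I) {a : Fin n}
    (hau : a ∈ G.alpha u) (hav : a ∈ G.alpha v) : u = v := by
  by_contra huv
  simpa [hI u hu v hv huv] using mem_inter.2 ⟨hau, hav⟩

theorem Indep.not_adj (hI : G.Indep I) {u v : G.V} (hu : u ∈ I) (hv : v ∈ I) : ¬ G.Adj u v :=
  fun ⟨huv, _, ha⟩ => huv <| hI.eq_of_mem_alpha hu hv (mem_inter.1 ha).1 (mem_inter.1 ha).2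

theorem Indep.disjoint_of_subset_nbhd (hI : G.Indep I) (hX : X ⊆ G.nbhd I) : Disjoint X I := by
  rw [disjoint_left]
  intro x hxX hxI
  obtain ⟨u, hu, hux⟩ := (G.mem_nbhd).1 (hX hxX)
  exact hI.not_adj hu hxI hux

/-- An exchange that drops `u` from `I` and keeps `α(I)` covered must drop `u'` as well. -/
def Forces (I : Finset G.V) (u u' : G.V) : Prop :=
  u' ∈ I ∧ ∃ a ∈ G.alpha u, ∀ x ∉ I, a ∈ G.alpha x → (G.alpha x ∩ G.alpha u').Nonempty

theorem mem_of_indep_insert (hdom : Iᶜ ⊆ G.nbhd I) {v : G.V} (hv : G.Indep (insert v I)) :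
    v ∈ I := by
  by_contra hvI
  obtain ⟨u, hu, huv⟩ := (G.mem_nbhd).1 (hdom (mem_compl.2 hvI))
  exact hv.not_adj (mem_insert_of_mem hu) (mem_insert_self v I) huv

theorem Indep.exists_mem_alpha_of_removed (hI : G.Indep I) {Y : Finset G.V}
    (hcov : G.aset I ⊆ G.aset ((I ∪ X) \ Y)) {u : G.V} (huI : u ∈ I) (huY : u ∈ Y) {a : Fin n}
    (ha : a ∈ G.alpha u) : ∃ x ∈ X, a ∈ G.alpha x := by
  obtain ⟨w, hw, haw⟩ := G.mem_aset.1 (hcov (G.mem_aset.2 ⟨u, huI, ha⟩))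
  obtain ⟨hw, hwY⟩ := mem_sdiff.1 hw
  rcases mem_union.1 hw with hwI | hwX
  · exact absurd (hI.eq_of_mem_alpha hwI huI haw ha ▸ huY) hwY
  · exact ⟨w, hwX, haw⟩

theorem Indep.mem_removed_of_forces (hI : G.Indep I) (hX : X ⊆ G.nbhd I)
    (hcov : G.aset I ⊆ G.aset ((I ∪ X) \ (G.nbhd X ∩ I))) {u u' : G.V}
    (hu : u ∈ G.nbhd X ∩ I) (huu' : G.Forces I u u') : u' ∈ G.nbhd X ∩ I := by
  obtain ⟨hu'I, a, ha, hforce⟩ := huu'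
  obtain ⟨x, hxX, hax⟩ := hI.exists_mem_alpha_of_removed hcov (mem_inter.1 hu).2 hu ha
  have hxI : x ∉ I := disjoint_left.1 (hI.disjoint_of_subset_nbhd hX) hxX
  refine mem_inter.2 ⟨G.mem_nbhd.2 ⟨x, hxX, ?_, hforce x hxI hax⟩, hu'I⟩
  rintro rfl
  exact hxI hu'I

theorem nonempty_removed (hX : X ⊆ G.nbhd I) (hne : X.Nonempty) : (G.nbhd X ∩ I).Nonempty := by
  obtain ⟨x, hx⟩ := hne
  obtain ⟨u, hu, hux⟩ := G.mem_nbhd.1 (hX hx)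
  exact ⟨u, mem_inter.2 ⟨G.mem_nbhd.2 ⟨x, hx, hux.symm⟩, hu⟩⟩

theorem nonempty_of_aset_ssubset (h : G.aset I ⊂ G.aset ((I ∪ X) \ (G.nbhd X ∩ I))) :
    X.Nonempty := by
  rw [nonempty_iff_ne_empty]
  rintro rfl
  simp [nbhd_empty] at h

/-- An improving exchange drops some node of `I`, hence, by forcing, all of `I`. -/
theorem eqLocalOpt_of_forces {q : ℕ} (hI : G.Indep I) (hdom : Iᶜ ⊆ G.nbhd I)
    (hforce : ∀ u ∈ I, ∀ u' ∈ I, Relation.ReflTransGen (G.Forces I) u u')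
    (hq : q < I.card) : G.EqLocalOpt q I := by
  refine ⟨hI, fun _ => mem_of_indep_insert hdom, ?_⟩
  rintro ⟨X, hX, -, hcard, -, hss⟩
  obtain ⟨u, hu⟩ := nonempty_removed hX (nonempty_of_aset_ssubset hss)
  have hIY : I ⊆ G.nbhd X ∩ I := by
    intro u' hu'
    have hchain := hforce u (mem_inter.1 hu).2 u' hu'
    clear hu'
    induction hchain with
    | refl => exact hu
    | tail _ h ih => exact hI.mem_removed_of_forces hX hss.subset ih h
  have := card_le_card hIY
  omega

end CycleGraph

namespace NearlyTight

open CycleGraph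

variable (q : ℕ)

def iLabel (i : Fin (q + 1)) : Finset (Fin (6 * q + 9)) :=
  {⟨6 * i, by omega⟩, ⟨6 * i + 3, by omega⟩, ⟨6 * i + 7, by omega⟩}

def oLabel (j : Fin (2 * q + 3)) : Finset (Fin (6 * q + 9)) :=
  {⟨3 * j, by omega⟩, ⟨3 * j + 1, by omega⟩, ⟨3 * j + 2, by omega⟩}

variable {q}

theorem mem_iLabel {i : Fin (q + 1)} {a : Fin (6 * q + 9)} :
    a ∈ iLabel q i ↔ (a : ℕ) = 6 * i ∨ (a : ℕ) = 6 * i + 3 ∨ (a : ℕ) = 6 * i + 7 := by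
  simp [iLabel, Fin.ext_iff]

theorem mem_oLabel {j : Fin (2 * q + 3)} {a : Fin (6 * q + 9)} :
    a ∈ oLabel q j ↔ (a : ℕ) / 3 = j := by
  simp only [oLabel, mem_insert, mem_singleton, Fin.ext_iff]
  omega

variable (q)

theorem card_iLabel (i : Fin (q + 1)) : (iLabel q i).card = 3 := by
  rw [iLabel, card_insert_of_notMem (by simp [Fin.ext_iff]),
    card_insert_of_notMem (by simp [Fin.ext_iff]), card_singleton]

theorem card_oLabel (j : Fin (2 * q + 3)) : (oLabel q j).card = 3 := by
  rw [oLabel, card_insert_of_notMem (by simp [Fin.ext_iff]),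
    card_insert_of_notMem (by simp [Fin.ext_iff]), card_singleton]

abbrev graph : CycleGraph (6 * q + 9) 3 where
  V := Fin (q + 1) ⊕ Fin (2 * q + 3)
  fintypeV := inferInstance
  decEqV := inferInstance
  alpha := Sum.elim (iLabel q) (oLabel q)
  two_le_card v := by cases v <;> simp [card_iLabel, card_oLabel]
  card_le_k v := by cases v <;> simp [card_iLabel, card_oLabel]

def locOpt : Finset (graph q).V := univ.map Function.Embedding.inl

def opt : Finset (graph q).V := univ.map Function.Embedding.inr

variable {q}

@[simp]
theorem inl_mem_locOpt (i : Fin (q + 1)) : (Sum.inl i : (graph q).V) ∈ locOpt q := by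
  simp [locOpt]

theorem indep_locOpt : (graph q).Indep (locOpt q) := by
  simp only [Indep, locOpt, mem_map, mem_univ, true_and, forall_exists_index]
  rintro _ i rfl _ i' rfl hii'
  ext a
  simp only [Function.Embedding.inl_apply, Sum.elim_inl, mem_inter, mem_iLabel,
    notMem_empty, iff_false, not_and]
  have : (i : ℕ) ≠ i' := fun h => hii' (by rw [Fin.ext h])
  omega

theorem indep_opt : (graph q).Indep (opt q) := by
  simp only [Indep, opt, mem_map, mem_univ, true_and, forall_exists_index]
  rintro _ j rfl _ j' rfl hjj'
  ext a
  simp only [Function.Embedding.inr_apply, Sum.elim_inr, mem_inter, mem_oLabel,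
    notMem_empty, iff_false, not_and]
  have : (j : ℕ) ≠ j' := fun h => hjj' (by rw [Fin.ext h])
  omega

theorem compl_locOpt_subset_nbhd : (locOpt q)ᶜ ⊆ (graph q).nbhd (locOpt q) := by
  rintro (i | j) hv
  · exact absurd (inl_mem_locOpt i) (mem_compl.1 hv)
  obtain ⟨i, a, hi, ha⟩ : ∃ (i a : ℕ), i < q + 1 ∧
      (a = 6 * i ∨ a = 6 * i + 3 ∨ a = 6 * i + 7) ∧ a / 3 = j := by
    rcases Nat.even_or_odd' (j : ℕ) with ⟨c, hc | hc⟩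
    · by_cases hcq : c ≤ q
      · exact ⟨c, 6 * c, by omega, by omega, by omega⟩
      · exact ⟨q, 6 * q + 7, by omega, by omega, by omega⟩
    · exact ⟨c, 6 * c + 3, by omega, by omega, by omega⟩
  refine (graph q).mem_nbhd.2 ⟨.inl ⟨i, hi⟩, inl_mem_locOpt _, Sum.inl_ne_inr,
    ⟨⟨a, by omega⟩, mem_inter.2 ⟨mem_iLabel.2 ha.1, mem_oLabel.2 ha.2⟩⟩⟩

theorem forces_succ (i : Fin q) :
    (graph q).Forces (locOpt q) (.inl i.castSucc) (.inl i.succ) := by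
  refine ⟨inl_mem_locOpt _, ⟨6 * i + 7, by omega⟩, mem_iLabel.2 (by simp), ?_⟩
  rintro (i' | j) hx ha
  · exact absurd (inl_mem_locOpt i') hx
  refine ⟨⟨6 * i + 6, by omega⟩, mem_inter.2 ⟨mem_oLabel.2 ?_, mem_iLabel.2 ?_⟩⟩
  · have := mem_oLabel.1 ha
    simp only at this ⊢
    omega
  · simp only [Fin.val_succ]
    omega

theorem forces_castSucc (i : Fin q) :
    (graph q).Forces (locOpt q) (.inl i.succ) (.inl i.castSucc) := by
  refine ⟨inl_mem_locOpt _, ⟨6 * i + 6, by omega⟩, mem_iLabel.2 (by simp; omega), ?_⟩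
  rintro (i' | j) hx ha
  · exact absurd (inl_mem_locOpt i') hx
  refine ⟨⟨6 * i + 7, by omega⟩, mem_inter.2 ⟨mem_oLabel.2 ?_, mem_iLabel.2 (by simp)⟩⟩
  have := mem_oLabel.1 ha
  simp only at this ⊢
  omega

theorem forces_chain :
    ∀ u ∈ locOpt q, ∀ u' ∈ locOpt q, Relation.ReflTransGen ((graph q).Forces (locOpt q)) u u' := by
  have hzero (i : Fin (q + 1)) :
      Relation.ReflTransGen ((graph q).Forces (locOpt q)) (.inl 0) (.inl i) ∧
        Relation.ReflTransGen ((graph q).Forces (locOpt q)) (.inl i) (.inl 0) := by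
    induction i using Fin.induction with
    | zero => exact ⟨.refl, .refl⟩
    | succ i ih => exact ⟨ih.1.tail (forces_succ i), ih.2.head (forces_castSucc i)⟩
  simp only [locOpt, mem_map, mem_univ, true_and, forall_exists_index]
  rintro _ i rfl _ i' rfl
  exact (hzero i).2.trans (hzero i').1

variable (q)

theorem card_locOpt : (locOpt q).card = q + 1 := by
  simp [locOpt]

theorem weight_locOpt : ∑ v ∈ locOpt q, ((graph q).alpha v).card = 3 * (q + 1) := by
  simp [locOpt, card_iLabel, mul_comm]

theorem weight_opt : ∑ v ∈ opt q, ((graph q).alpha v).card = 3 * (2 * q + 3) := by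
  simp [opt, card_oLabel, mul_comm]

end NearlyTight

theorem eqLocalOpt_nearly_tight_general (q : ℕ) :
    ∃ (G : CycleGraph (6 * q + 9) 3) (I O : Finset G.V),
      G.EqLocalOpt q I ∧ G.Indep O ∧
      (∑ v ∈ I, (G.alpha v).card) = 3 * (q + 1) ∧
      (∑ v ∈ O, (G.alpha v).card) = 3 * (2 * q + 3) ∧
      (∑ v ∈ O, ((G.alpha v).card : ℝ)) / (∑ v ∈ I, ((G.alpha v).card : ℝ))
        = 2 + 1 / ((q : ℝ) + 1) := by
  open NearlyTight in
  refine ⟨graph q, locOpt q, opt q,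
    CycleGraph.eqLocalOpt_of_forces indep_locOpt compl_locOpt_subset_nbhd forces_chain
      (card_locOpt q ▸ q.lt_succ_self), indep_opt, weight_locOpt q, weight_opt q, ?_⟩
  rw [← Nat.cast_sum, ← Nat.cast_sum, weight_locOpt, weight_opt]
  push_cast
  field_simp
  ring

/-- The analysis of `LS_q` is nearly tight.  For every `q ≥ 1` there
exist a `3`-cycle graph `G` over `n = 6q + 9` agents, an `(E,q)`-locally optimal
independent set `I` of weight `w(I) = 3(q+1)`, and an independent set `O` of weight
`w(O) = 3(2q+3)` (uniform weights `w(v) = |α(v)|`); consequently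
`w(O)/w(I) = 2 + 1/(q+1) = k − 1 + 1/(q+1)` for `k = 3`. -/
theorem eqLocalOpt_nearly_tight (q : ℕ) (hq : 1 ≤ q) :
    ∃ (G : CycleGraph (6 * q + 9) 3) (I O : Finset G.V),
      G.EqLocalOpt q I ∧ G.Indep O ∧
      (∑ v ∈ I, (G.alpha v).card) = 3 * (q + 1) ∧
      (∑ v ∈ O, (G.alpha v).card) = 3 * (2 * q + 3) ∧
      (∑ v ∈ O, ((G.alpha v).card : ℝ)) / (∑ v ∈ I, ((G.alpha v).card : ℝ))
        = 2 + 1 / ((q : ℝ) + 1) :=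
  eqLocalOpt_nearly_tight_general q
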